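/- Let n be a positive integer, C an additive category, and E : C^op × C → Ab a biadditive functor. Let ⟨X•,δ⟩ (with ends A = X^0, C = X^{n+1}) and ⟨Y•,ρ⟩ (with ends B = Y^0, D = Y^{n+1}) be E-attached complexes. Then the E-attached complex ⟨X•⊕Y•, δ⊕ρ⟩ is an n-exangle if and only if both ⟨X•,δ⟩ and ⟨Y•,ρ⟩ are n-exangles. -/

import Mathlib

/-!
Basic definitions for the theory of `n`-exangulated categories
(Herschend–Liu–Nakaoka): `(n+2)`-term complexes in an additive category,
morphisms of such complexes, homotopies, and homotopy equivalences.

A complex is recorded as a function `obj : ℕ → C` together with differentials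
`d i : obj i ⟶ obj (i+1)`; only the components in degrees `0, …, n+1`
(and the differentials `d 0, …, d n`) are relevant, which is why all
conditions are imposed only in that range.
-/

open CategoryTheory CategoryTheory.Limits Opposite

universe w v u

namespace NExangulated

variable (C : Type u) [Category.{v} C] [Preadditive C]

/-- An `(n+2)`-term complex `X^0 → X^1 → ⋯ → X^{n+1}` in `C`. -/
structure NComplex (n : ℕ) where
  /-- the objects; only `obj 0, …, obj (n+1)` are relevant -/
  obj : ℕ → C
  /-- the differentials -/
  d : ∀ i : ℕ, obj i ⟶ obj (i + 1)
  /-- `d^{i+1} ∘ d^i = 0` for `0 ≤ i ≤ n-1` -/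
  d_comp_d : ∀ i : ℕ, i + 1 ≤ n → d i ≫ d (i + 1) = 0

variable {C}
variable {n : ℕ}

/-- A morphism of `(n+2)`-term complexes. -/
structure NComplexHom (X Y : NComplex C n) where
  /-- the components; only `f 0, …, f (n+1)` are relevant -/
  f : ∀ i : ℕ, X.obj i ⟶ Y.obj i
  /-- compatibility with the differentials, for `0 ≤ i ≤ n` -/
  comm : ∀ i : ℕ, i ≤ n → f i ≫ Y.d i = X.d i ≫ f (i + 1)

/-- The identity morphism of complexes. -/
def NComplexHom.id (X : NComplex C n) : NComplexHom X X where
  f _ := 𝟙 _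
  comm _ _ := by simp

/-- Composition of morphisms of complexes (in diagrammatic order:
`f.comp g` is `g• ∘ f•`). -/
def NComplexHom.comp {X Y Z : NComplex C n} (f : NComplexHom X Y) (g : NComplexHom Y Z) :
    NComplexHom X Z where
  f i := f.f i ≫ g.f i
  comm i hi := by
    rw [Category.assoc, g.comm i hi, ← Category.assoc, f.comm i hi, Category.assoc]

/-- `φ` is a homotopy from `f` to `g`:  here `φ i : X^{i+1} ⟶ Y^i` plays the role of
the component `φ^{i+1}` (for `0 ≤ i ≤ n`, i.e. `1 ≤ i+1 ≤ n+1`). -/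
def IsHomotopy {X Y : NComplex C n} (f g : NComplexHom X Y)
    (φ : ∀ i : ℕ, X.obj (i + 1) ⟶ Y.obj i) : Prop :=
  (g.f 0 - f.f 0 = X.d 0 ≫ φ 0) ∧
    (∀ i : ℕ, i + 1 ≤ n →
      g.f (i + 1) - f.f (i + 1) = φ i ≫ Y.d i + X.d (i + 1) ≫ φ (i + 1)) ∧
    (g.f (n + 1) - f.f (n + 1) = φ n ≫ Y.d n)

/-- Two morphisms of complexes are homotopic. -/
def Homotopic {X Y : NComplex C n} (f g : NComplexHom X Y) : Prop :=
  ∃ φ, IsHomotopy f g φ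

/-- `g` is a homotopy inverse of `f`. -/
def IsHomotopyInverse {X Y : NComplex C n} (f : NComplexHom X Y) (g : NComplexHom Y X) : Prop :=
  Homotopic (f.comp g) (NComplexHom.id X) ∧ Homotopic (g.comp f) (NComplexHom.id Y)

/-- `f` is a homotopy equivalence of complexes. -/
def IsHomotopyEquiv {X Y : NComplex C n} (f : NComplexHom X Y) : Prop :=
  ∃ g, IsHomotopyInverse f g

/-- Exactness of a two-term sequence of (pointed) sets at the middle term:
the image of `f` equals the kernel of `g`. -/
def ExactAt {α β γ : Type*} [Zero γ] (f : α → β) (g : β → γ) : Prop :=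
  ∀ b : β, g b = 0 ↔ ∃ a : α, f a = b

end NExangulated
namespace NExangulated

variable {C : Type u} [Category.{v} C] [Preadditive C] {n : ℕ}

section E

variable (E : Cᵒᵖ ⥤ C ⥤ AddCommGrpCat.{w})

/-- `a_*δ := E(id, a)(δ)`. -/
def pushE {A A' B : C} (a : A ⟶ A') (δ : (E.obj (op B)).obj A) : (E.obj (op B)).obj A' :=
  (E.obj (op B)).map a δ

/-- `c^*δ := E(c, id)(δ)`. -/
def pullE {A B B' : C} (c : B' ⟶ B) (δ : (E.obj (op B)).obj A) : (E.obj (op B')).obj A :=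
  (E.map c.op).app A δ

/-- `⟨X, δ⟩` is an `E`-attached complex: `(d^0)_*δ = 0` and `(d^n)^*δ = 0`. -/
def IsAttached (X : NComplex C n) (δ : (E.obj (op (X.obj (n + 1)))).obj (X.obj 0)) : Prop :=
  pushE E (X.d 0) δ = 0 ∧ pullE E (X.d n) δ = 0

/-- `⟨X, δ⟩` is an `n`-exangle: for every object `Q` the two induced sequences of
abelian groups
`C(Q,X^0) → ⋯ → C(Q,X^{n+1}) → E(Q,X^0)` and
`C(X^{n+1},Q) → ⋯ → C(X^0,Q) → E(X^{n+1},Q)`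
are exact at every term having both an incoming and an outgoing map. -/
def IsExangle (X : NComplex C n) (δ : (E.obj (op (X.obj (n + 1)))).obj (X.obj 0)) : Prop :=
  (∀ Q : C,
      (∀ i : ℕ, i + 1 ≤ n →
        ExactAt (fun u : Q ⟶ X.obj i => u ≫ X.d i)
          (fun u : Q ⟶ X.obj (i + 1) => u ≫ X.d (i + 1))) ∧
      ExactAt (fun u : Q ⟶ X.obj n => u ≫ X.d n)
        (fun u : Q ⟶ X.obj (n + 1) => pullE E u δ)) ∧
  (∀ Q : C,
      (∀ i : ℕ, i + 1 ≤ n →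
        ExactAt (fun u : X.obj (i + 2) ⟶ Q => X.d (i + 1) ≫ u)
          (fun u : X.obj (i + 1) ⟶ Q => X.d i ≫ u)) ∧
      ExactAt (fun u : X.obj 1 ⟶ Q => X.d 0 ≫ u)
        (fun u : X.obj 0 ⟶ Q => pushE E u δ))

end E

end NExangulated
namespace NExangulated

attribute [local instance] CategoryTheory.Limits.hasBinaryBiproducts_of_finite_biproducts

variable {C : Type u} [Category.{v} C] [Preadditive C] [HasFiniteBiproducts C] {n : ℕ}

/-- The direct sum of two `(n+2)`-term complexes. -/
noncomputable def dsum (X Y : NComplex C n) : NComplex C n where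
  obj i := X.obj i ⊞ Y.obj i
  d i := biprod.map (X.d i) (Y.d i)
  d_comp_d i hi := by
    apply biprod.hom_ext
    · simp [X.d_comp_d i hi]
    · simp [Y.d_comp_d i hi]
end NExangulated

/-!
The functors `C(Q, -)`, `C(-, Q)`, `E(Q, -)` and `E(-, Q)` are additive, so they turn biproducts
into products of abelian groups. Under these identifications each of the two long sequences
attached to `⟨X• ⊕ Y•, δ ⊕ ρ⟩` becomes the product of the corresponding sequences for `⟨X•, δ⟩`
and `⟨Y•, ρ⟩`: for the last map this is where the four component equations defining `δ ⊕ ρ`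
enter. A product of two sequences of pointed sets is exact at a term iff both factors are.
-/

namespace NExangulated

namespace ExactAt

variable {α β γ α' β' γ' : Type*} [Zero γ] [Zero γ']

theorem iff_of_ladder (eα : α ≃ α') (eβ : β ≃ β') {eγ : γ → γ'} (heγ : Function.Injective eγ)
    (heγ₀ : eγ 0 = 0) {f : α → β} {g : β → γ} {f' : α' → β'} {g' : β' → γ'}
    (hf : ∀ a, eβ (f a) = f' (eα a)) (hg : ∀ b, eγ (g b) = g' (eβ b)) :
    ExactAt f g ↔ ExactAt f' g' := by
  have range_iff (b : β) : (∃ a, f a = b) ↔ ∃ a', f' a' = eβ b := by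
    rw [← eα.exists_congr_right]
    simp only [← hf, eβ.apply_eq_iff_eq]
  refine ⟨fun h b' => ?_, fun h b => ?_⟩
  · obtain ⟨b, rfl⟩ := eβ.surjective b'
    rw [← range_iff, ← h, ← hg, heγ.eq_iff' heγ₀]
  · rw [range_iff, ← h, ← hg, heγ.eq_iff' heγ₀]

theorem prodMap_iff [Zero α] [Zero β] [Zero α'] [Zero β']
    {f : α → β} {g : β → γ} {f' : α' → β'} {g' : β' → γ'}
    (hf : f 0 = 0) (hg : g 0 = 0) (hf' : f' 0 = 0) (hg' : g' 0 = 0) :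
    ExactAt (Prod.map f f') (Prod.map g g') ↔ ExactAt f g ∧ ExactAt f' g' := by
  have prod_iff : ExactAt (Prod.map f f') (Prod.map g g') ↔
      ∀ b b', (g b = 0 ∧ g' b' = 0 ↔ (∃ a, f a = b) ∧ ∃ a', f' a' = b') := by
    simp only [ExactAt, Prod.forall, Prod.exists, Prod.map_apply, Prod.mk_eq_zero, Prod.mk.injEq,
      exists_and_left, exists_and_right]
  rw [prod_iff]
  refine ⟨fun h => ⟨fun b => ?_, fun b' => ?_⟩, fun ⟨h, h'⟩ b b' => and_congr (h b) (h' b')⟩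
  · have zero_mem_range : ∃ a', f' a' = 0 := ⟨0, hf'⟩
    simpa only [hg', and_true, zero_mem_range] using h b 0
  · have zero_mem_range : ∃ a, f a = 0 := ⟨0, hf⟩
    simpa only [hg, true_and, zero_mem_range] using h 0 b'

end ExactAt

section Functoriality

variable {C : Type u} [Category.{v} C] (E : Cᵒᵖ ⥤ C ⥤ AddCommGrpCat.{w})
  {A A' A'' B B' B'' : C}

@[simp]
theorem pushE_id (x : (E.obj (op B)).obj A) : pushE E (𝟙 A) x = x := by
  simp [pushE]

@[simp]
theorem pullE_id (x : (E.obj (op B)).obj A) : pullE E (𝟙 B) x = x := by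
  simp [pullE]

theorem pushE_pushE (a : A ⟶ A') (a' : A' ⟶ A'') (x : (E.obj (op B)).obj A) :
    pushE E a' (pushE E a x) = pushE E (a ≫ a') x := by
  simp [pushE]

theorem pullE_pullE (c : B' ⟶ B) (c' : B'' ⟶ B') (x : (E.obj (op B)).obj A) :
    pullE E c' (pullE E c x) = pullE E (c' ≫ c) x := by
  simp [pullE]

theorem pushE_pullE (a : A ⟶ A') (c : B' ⟶ B) (x : (E.obj (op B)).obj A) :
    pushE E a (pullE E c x) = pullE E c (pushE E a x) :=
  (ConcreteCategory.congr_hom ((E.map c.op).naturality a) x).symm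

@[simp]
theorem pushE_zero (a : A ⟶ A') : pushE E a (0 : (E.obj (op B)).obj A) = 0 :=
  map_zero _

@[simp]
theorem pullE_zero (c : B' ⟶ B) : pullE E c (0 : (E.obj (op B)).obj A) = 0 :=
  map_zero _

theorem pushE_add (a : A ⟶ A') (x y : (E.obj (op B)).obj A) :
    pushE E a (x + y) = pushE E a x + pushE E a y :=
  map_add _ _ _

theorem pullE_add (c : B' ⟶ B) (x y : (E.obj (op B)).obj A) :
    pullE E c (x + y) = pullE E c x + pullE E c y :=
  map_add _ _ _

variable [Preadditive C]

@[simp]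
theorem zero_pushE [∀ B : Cᵒᵖ, (E.obj B).Additive] (x : (E.obj (op B)).obj A) :
    pushE E (0 : A ⟶ A') x = 0 := by
  simp [pushE]

@[simp]
theorem zero_pullE [E.Additive] (x : (E.obj (op B)).obj A) :
    pullE E (0 : B' ⟶ B) x = 0 := by
  simp [pullE]

theorem add_pushE [∀ B : Cᵒᵖ, (E.obj B).Additive] (a a' : A ⟶ A') (x : (E.obj (op B)).obj A) :
    pushE E (a + a') x = pushE E a x + pushE E a' x := by
  simp [pushE]

theorem add_pullE [E.Additive] (c c' : B' ⟶ B) (x : (E.obj (op B)).obj A) :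
    pullE E (c + c') x = pullE E c x + pullE E c' x := by
  simp [pullE]

end Functoriality

section Biproducts

variable {C : Type u} [Category.{v} C] [Preadditive C] [HasBinaryBiproducts C]

@[simps]
noncomputable def homBiprodEquiv (Q A B : C) : (Q ⟶ A ⊞ B) ≃ (Q ⟶ A) × (Q ⟶ B) where
  toFun u := (u ≫ biprod.fst, u ≫ biprod.snd)
  invFun p := biprod.lift p.1 p.2
  left_inv u := by ext <;> simp
  right_inv p := by simp

@[simps]
noncomputable def biprodHomEquiv (A B Q : C) : (A ⊞ B ⟶ Q) ≃ (A ⟶ Q) × (B ⟶ Q) where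
  toFun u := (biprod.inl ≫ u, biprod.inr ≫ u)
  invFun p := biprod.desc p.1 p.2
  left_inv u := by ext <;> simp
  right_inv p := by simp

theorem exactAt_comp_biprod_map_iff {Q A₁ A₂ B₁ B₂ C₁ C₂ : C} (f₁ : A₁ ⟶ B₁) (f₂ : A₂ ⟶ B₂)
    (g₁ : B₁ ⟶ C₁) (g₂ : B₂ ⟶ C₂) :
    ExactAt (fun u : Q ⟶ A₁ ⊞ A₂ => u ≫ biprod.map f₁ f₂) (fun u => u ≫ biprod.map g₁ g₂) ↔
      ExactAt (fun u : Q ⟶ A₁ => u ≫ f₁) (fun u => u ≫ g₁) ∧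
        ExactAt (fun u : Q ⟶ A₂ => u ≫ f₂) (fun u => u ≫ g₂) := by
  rw [← ExactAt.prodMap_iff (by simp) (by simp) (by simp) (by simp)]
  exact ExactAt.iff_of_ladder (homBiprodEquiv _ _ _) (homBiprodEquiv _ _ _)
    (homBiprodEquiv _ _ _).injective (by simp) (fun u => by simp) (fun u => by simp)

theorem exactAt_biprod_map_comp_iff {Q A₁ A₂ B₁ B₂ C₁ C₂ : C} (f₁ : A₁ ⟶ B₁) (f₂ : A₂ ⟶ B₂)
    (g₁ : B₁ ⟶ C₁) (g₂ : B₂ ⟶ C₂) :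
    ExactAt (fun u : C₁ ⊞ C₂ ⟶ Q => biprod.map g₁ g₂ ≫ u) (fun u => biprod.map f₁ f₂ ≫ u) ↔
      ExactAt (fun u : C₁ ⟶ Q => g₁ ≫ u) (fun u => f₁ ≫ u) ∧
        ExactAt (fun u : C₂ ⟶ Q => g₂ ≫ u) (fun u => f₂ ≫ u) := by
  rw [← ExactAt.prodMap_iff (by simp) (by simp) (by simp) (by simp)]
  exact ExactAt.iff_of_ladder (biprodHomEquiv _ _ _) (biprodHomEquiv _ _ _)
    (biprodHomEquiv _ _ _).injective (by simp) (fun u => by simp) (fun u => by simp)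

variable (E : Cᵒᵖ ⥤ C ⥤ AddCommGrpCat.{w})

theorem pullE_biprod_total [E.Additive] {Q A C₁ C₂ : C} (u : Q ⟶ C₁ ⊞ C₂)
    (x : (E.obj (op (C₁ ⊞ C₂))).obj A) :
    pullE E u x = pullE E (u ≫ biprod.fst) (pullE E biprod.inl x) +
      pullE E (u ≫ biprod.snd) (pullE E biprod.inr x) := by
  conv_lhs => rw [← Category.comp_id u, ← biprod.total]
  simp only [Preadditive.comp_add, ← Category.assoc, add_pullE, pullE_pullE]

theorem pushE_biprod_total [∀ B : Cᵒᵖ, (E.obj B).Additive] {Q A₁ A₂ B : C} (u : A₁ ⊞ A₂ ⟶ Q)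
    (x : (E.obj (op B)).obj (A₁ ⊞ A₂)) :
    pushE E u x = pushE E (biprod.inl ≫ u) (pushE E biprod.fst x) +
      pushE E (biprod.inr ≫ u) (pushE E biprod.snd x) := by
  conv_lhs => rw [← Category.id_comp u, ← biprod.total]
  simp only [Preadditive.add_comp, Category.assoc, add_pushE, pushE_pushE]

theorem pullE_inl_inr_injective [E.Additive] {A C₁ C₂ : C} :
    Function.Injective fun x : (E.obj (op (C₁ ⊞ C₂))).obj A =>
      (pullE E biprod.inl x, pullE E biprod.inr x) := by
  intro x y hxy
  rw [Prod.mk.injEq] at hxy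
  have eta (z : (E.obj (op (C₁ ⊞ C₂))).obj A) :
      z = pullE E biprod.fst (pullE E biprod.inl z) +
        pullE E biprod.snd (pullE E biprod.inr z) := by
    simpa using pullE_biprod_total E (𝟙 _) z
  rw [eta x, eta y, hxy.1, hxy.2]

theorem pushE_fst_snd_injective [∀ B : Cᵒᵖ, (E.obj B).Additive] {A₁ A₂ B : C} :
    Function.Injective fun x : (E.obj (op B)).obj (A₁ ⊞ A₂) =>
      (pushE E biprod.fst x, pushE E biprod.snd x) := by
  intro x y hxy
  rw [Prod.mk.injEq] at hxy
  have eta (z : (E.obj (op B)).obj (A₁ ⊞ A₂)) :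
      z = pushE E biprod.inl (pushE E biprod.fst z) +
        pushE E biprod.inr (pushE E biprod.snd z) := by
    simpa using pushE_biprod_total E (𝟙 _) z
  rw [eta x, eta y, hxy.1, hxy.2]

/-- `σ` is `δ ⊕ ρ`. -/
structure IsBiprodSum {A₁ A₂ C₁ C₂ : C} (σ : (E.obj (op (C₁ ⊞ C₂))).obj (A₁ ⊞ A₂))
    (δ : (E.obj (op C₁)).obj A₁) (ρ : (E.obj (op C₂)).obj A₂) : Prop where
  fst_inl : pushE E biprod.fst (pullE E biprod.inl σ) = δ
  snd_inl : pushE E biprod.snd (pullE E biprod.inl σ) = 0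
  fst_inr : pushE E biprod.fst (pullE E biprod.inr σ) = 0
  snd_inr : pushE E biprod.snd (pullE E biprod.inr σ) = ρ

namespace IsBiprodSum

variable {E} {A₁ A₂ C₁ C₂ : C} {σ : (E.obj (op (C₁ ⊞ C₂))).obj (A₁ ⊞ A₂)}
  {δ : (E.obj (op C₁)).obj A₁} {ρ : (E.obj (op C₂)).obj A₂}

theorem pushE_fst_snd_pullE [E.Additive] (hσ : IsBiprodSum E σ δ ρ) {Q : C} (u : Q ⟶ C₁ ⊞ C₂) :
    (pushE E biprod.fst (pullE E u σ), pushE E biprod.snd (pullE E u σ)) =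
      (pullE E (u ≫ biprod.fst) δ, pullE E (u ≫ biprod.snd) ρ) := by
  simp only [pullE_biprod_total E u σ, pushE_add, pushE_pullE, hσ.fst_inl, hσ.snd_inl,
    hσ.fst_inr, hσ.snd_inr, pullE_zero, add_zero, zero_add]

theorem pullE_inl_inr_pushE [∀ B : Cᵒᵖ, (E.obj B).Additive] (hσ : IsBiprodSum E σ δ ρ) {Q : C}
    (u : A₁ ⊞ A₂ ⟶ Q) :
    (pullE E biprod.inl (pushE E u σ), pullE E biprod.inr (pushE E u σ)) =
      (pushE E (biprod.inl ≫ u) δ, pushE E (biprod.inr ≫ u) ρ) := by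
  simp only [pushE_biprod_total E u σ, pullE_add, ← pushE_pullE, hσ.fst_inl, hσ.snd_inl,
    hσ.fst_inr, hσ.snd_inr, pushE_zero, add_zero, zero_add]

theorem exactAt_pullE_iff [E.Additive] [∀ B : Cᵒᵖ, (E.obj B).Additive]
    (hσ : IsBiprodSum E σ δ ρ) {Q B₁ B₂ : C} (f₁ : B₁ ⟶ C₁) (f₂ : B₂ ⟶ C₂) :
    ExactAt (fun u : Q ⟶ B₁ ⊞ B₂ => u ≫ biprod.map f₁ f₂) (fun u => pullE E u σ) ↔
      ExactAt (fun u : Q ⟶ B₁ => u ≫ f₁) (fun u => pullE E u δ) ∧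
        ExactAt (fun u : Q ⟶ B₂ => u ≫ f₂) (fun u => pullE E u ρ) := by
  rw [← ExactAt.prodMap_iff (by simp) (zero_pullE E δ) (by simp) (zero_pullE E ρ)]
  exact ExactAt.iff_of_ladder (homBiprodEquiv _ _ _) (homBiprodEquiv _ _ _)
    (pushE_fst_snd_injective E) (by simp) (fun u => by simp) hσ.pushE_fst_snd_pullE

theorem exactAt_pushE_iff [E.Additive] [∀ B : Cᵒᵖ, (E.obj B).Additive]
    (hσ : IsBiprodSum E σ δ ρ) {Q B₁ B₂ : C} (f₁ : A₁ ⟶ B₁) (f₂ : A₂ ⟶ B₂) :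
    ExactAt (fun u : B₁ ⊞ B₂ ⟶ Q => biprod.map f₁ f₂ ≫ u) (fun u => pushE E u σ) ↔
      ExactAt (fun u : B₁ ⟶ Q => f₁ ≫ u) (fun u => pushE E u δ) ∧
        ExactAt (fun u : B₂ ⟶ Q => f₂ ≫ u) (fun u => pushE E u ρ) := by
  rw [← ExactAt.prodMap_iff (by simp) (zero_pushE E δ) (by simp) (zero_pushE E ρ)]
  exact ExactAt.iff_of_ladder (biprodHomEquiv _ _ _) (biprodHomEquiv _ _ _)
    (pullE_inl_inr_injective E) (by simp) (fun u => by simp) hσ.pullE_inl_inr_pushE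

end IsBiprodSum

end Biproducts

section

attribute [local instance] CategoryTheory.Limits.hasBinaryBiproducts_of_finite_biproducts

variable {C : Type u} [Category.{v} C] [Preadditive C] [HasFiniteBiproducts C] {n : ℕ}

/-- Given `E`-attached complexes `⟨X•,δ⟩` and `⟨Y•,ρ⟩`, the
`E`-attached complex `⟨X• ⊕ Y•, δ ⊕ ρ⟩` is an `n`-exangle if and only if both
`⟨X•,δ⟩` and `⟨Y•,ρ⟩` are `n`-exangles.  (Here `σ = δ ⊕ ρ` is characterised by
the four equations expressing its components with respect to the biproduct.) -/
theorem statement_7 (hn : 0 < n) (E : Cᵒᵖ ⥤ C ⥤ AddCommGrpCat.{w})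
    [E.Additive] [∀ B : Cᵒᵖ, (E.obj B).Additive]
    (X Y : NComplex C n)
    (δ : (E.obj (op (X.obj (n + 1)))).obj (X.obj 0))
    (ρ : (E.obj (op (Y.obj (n + 1)))).obj (Y.obj 0))
    (hX : IsAttached E X δ) (hY : IsAttached E Y ρ)
    (σ : (E.obj (op ((dsum X Y).obj (n + 1)))).obj ((dsum X Y).obj 0))
    (hσ1 : pushE E (biprod.fst : X.obj 0 ⊞ Y.obj 0 ⟶ X.obj 0)
      (pullE E (biprod.inl : X.obj (n + 1) ⟶ X.obj (n + 1) ⊞ Y.obj (n + 1)) σ) = δ)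
    (hσ2 : pushE E (biprod.snd : X.obj 0 ⊞ Y.obj 0 ⟶ Y.obj 0)
      (pullE E (biprod.inl : X.obj (n + 1) ⟶ X.obj (n + 1) ⊞ Y.obj (n + 1)) σ) = 0)
    (hσ3 : pushE E (biprod.fst : X.obj 0 ⊞ Y.obj 0 ⟶ X.obj 0)
      (pullE E (biprod.inr : Y.obj (n + 1) ⟶ X.obj (n + 1) ⊞ Y.obj (n + 1)) σ) = 0)
    (hσ4 : pushE E (biprod.snd : X.obj 0 ⊞ Y.obj 0 ⟶ Y.obj 0)
      (pullE E (biprod.inr : Y.obj (n + 1) ⟶ X.obj (n + 1) ⊞ Y.obj (n + 1)) σ) = ρ) :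
    IsExangle E (dsum X Y) σ ↔ (IsExangle E X δ ∧ IsExangle E Y ρ) := by
  have hσ : IsBiprodSum E σ δ ρ := ⟨hσ1, hσ2, hσ3, hσ4⟩
  dsimp only [IsExangle, dsum]
  simp only [exactAt_comp_biprod_map_iff, hσ.exactAt_pullE_iff, exactAt_biprod_map_comp_iff,
    hσ.exactAt_pushE_iff, imp_and, forall_and]
  tauto

end

end NExangulated
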